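/- Suppose d = d_1 d_2 ⋯ d_k with pairwise coprime d_i, gcd(d, A) = 1 where A = ∏_i a_i, and the L_i(x) = a_i x + b_i satisfy the normalization hypothesis (all a_i share the same prime support, no prime of that support divides any b_j, and every prime factor of a_i b_j − a_j b_i divides all a_l for i ≠ j). Fix j, set m = a_j n + b_j. Then the simultaneous conditions d_i | L_i(n) for all i ≠ j are equivalent to a single congruence m ≡ m_0 (mod a_j · ∏_{i≠j} d_i) for some residue m_0 coprime to a_j ∏_{i≠j} d_i. -/

import Mathlib

/-!
By the Chinese remainder theorem there is `n₀` with `dᵢ ∣ aᵢ n₀ + bᵢ` for every `i`, since each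
`aᵢ` is invertible modulo `dᵢ`; then `dᵢ ∣ aᵢ n + bᵢ ↔ dᵢ ∣ n - n₀`. With `m₀ = aⱼ n₀ + bⱼ` we
have `m - m₀ = aⱼ (n - n₀)`, so the conditions for `i ≠ j` say `m ≡ m₀ (mod aⱼ ∏_{i ≠ j} dᵢ)`.
The residue `m₀` is prime to `aⱼ` because `bⱼ` is, and prime to `dᵢ` because
`aᵢ m₀ ≡ aᵢ bⱼ - aⱼ bᵢ (mod dᵢ)`, whose prime factors divide `aᵢ`.
-/

section CommRing

open Function

variable {R : Type*} [CommRing R]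

theorem exists_forall_dvd_sub_of_pairwise_isCoprime {ι : Type*} [Finite ι] {d : ι → R}
    (hd : Pairwise (IsCoprime on d)) (x : ι → R) : ∃ r, ∀ i, d i ∣ r - x i := by
  have hI : Pairwise (IsCoprime on fun i ↦ Ideal.span {d i}) := fun _ _ hij ↦
    (Ideal.isCoprime_span_singleton_iff _ _).mpr (hd hij)
  simpa only [Ideal.mem_span_singleton] using Ideal.exists_forall_sub_mem_ideal hI x

theorem IsCoprime.exists_dvd_mul_add {d a : R} (h : IsCoprime d a) (b : R) :
    ∃ r, d ∣ a * r + b := by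
  obtain ⟨u, v, huv⟩ := h
  exact ⟨-b * v, b * u, by linear_combination -b * huv⟩

theorem exists_forall_dvd_mul_add {ι : Type*} [Finite ι] {d a : ι → R}
    (hd : Pairwise (IsCoprime on d)) (hda : ∀ i, IsCoprime (d i) (a i)) (b : ι → R) :
    ∃ n₀, ∀ i, d i ∣ a i * n₀ + b i := by
  choose r hr using fun i ↦ (hda i).exists_dvd_mul_add (b i)
  obtain ⟨n₀, hn₀⟩ := exists_forall_dvd_sub_of_pairwise_isCoprime hd r
  refine ⟨n₀, fun i ↦ ?_⟩
  rw [show a i * n₀ + b i = a i * (n₀ - r i) + (a i * r i + b i) by ring]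
  exact dvd_add (dvd_mul_of_dvd_right (hn₀ i) _) (hr i)

theorem IsCoprime.dvd_mul_add_iff {d a b n₀ : R} (hda : IsCoprime d a)
    (h₀ : d ∣ a * n₀ + b) (n : R) : d ∣ a * n + b ↔ d ∣ n - n₀ := by
  rw [show a * n + b = (n - n₀) * a + (a * n₀ + b) by ring, dvd_add_left h₀]
  exact ⟨hda.dvd_of_dvd_mul_right, fun h ↦ dvd_mul_of_dvd_left h a⟩

theorem IsCoprime.mul_add_of_dvd_mul_add {d a b a' b' n₀ : R}
    (h : IsCoprime d (a' * b - a * b')) (h₀ : d ∣ a' * n₀ + b') :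
    IsCoprime d (a * n₀ + b) := by
  obtain ⟨c, hc⟩ := h₀
  have hmul : a' * (a * n₀ + b) = (a' * b - a * b') + d * (a * c) := by
    linear_combination a * hc
  have : IsCoprime d (a' * (a * n₀ + b)) := hmul ▸ h.add_mul_left_right (a * c)
  exact this.of_mul_right_right

theorem Finset.prod_dvd_iff_of_pairwise_isCoprime {ι : Type*} {s : Finset ι} {d : ι → R}
    {z : R} (hs : (s : Set ι).Pairwise (IsCoprime on d)) :
    ∏ i ∈ s, d i ∣ z ↔ ∀ i ∈ s, d i ∣ z :=
  ⟨fun h _ hi ↦ (Finset.dvd_prod_of_mem d hi).trans h, Finset.prod_dvd_of_coprime hs⟩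

end CommRing

theorem Int.isCoprime_of_natPrime_dvd {x y : ℤ}
    (h : ∀ p : ℕ, p.Prime → (p : ℤ) ∣ x → ¬(p : ℤ) ∣ y) : IsCoprime x y :=
  Int.isCoprime_iff_nat_coprime.mpr <| Nat.coprime_of_dvd fun p hp hx hy ↦
    h p hp (Int.natCast_dvd.mpr hx) (Int.natCast_dvd.mpr hy)

theorem stmt14_general (k : ℕ) (a b : Fin k → ℤ) (hpos : ∀ i, 0 < a i)
    (hb : ∀ p : ℕ, p.Prime → ∀ i j, (p : ℤ) ∣ a i → ¬ (p : ℤ) ∣ b j)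
    (hcross : ∀ i j, i ≠ j → ∀ p : ℕ, p.Prime →
      (p : ℤ) ∣ (a i * b j - a j * b i) → ∀ l, (p : ℤ) ∣ a l)
    (d : Fin k → ℤ)
    (hdcop : ∀ i j, i ≠ j → IsCoprime (d i) (d j))
    (hdA : IsCoprime (∏ i, d i) (∏ i, a i))
    (j : Fin k) :
    ∃ m₀ : ℤ, IsCoprime m₀ (a j * ∏ i ∈ Finset.univ.erase j, d i) ∧
      ∀ n : ℤ, (∀ i, i ≠ j → d i ∣ a i * n + b i) ↔
        a j * n + b j ≡ m₀ [ZMOD a j * ∏ i ∈ Finset.univ.erase j, d i] := by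
  have hda (i l : Fin k) : IsCoprime (d i) (a l) :=
    IsCoprime.prod_right_iff.mp (IsCoprime.prod_left_iff.mp hdA i (Finset.mem_univ i)) l
      (Finset.mem_univ l)
  obtain ⟨n₀, hn₀⟩ :=
    exists_forall_dvd_mul_add (fun _ _ hil ↦ hdcop _ _ hil) (fun i ↦ hda i i) b
  have hbj : IsCoprime (b j) (a j) :=
    Int.isCoprime_of_natPrime_dvd fun p hp hpb hpa ↦ hb p hp j j hpa hpb
  have hdcross (i : Fin k) (hij : i ≠ j) : IsCoprime (d i) (a i * b j - a j * b i) :=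
    Int.isCoprime_of_natPrime_dvd fun p hp hpd hpc ↦
      (Nat.prime_iff_prime_int.mp hp).not_isUnit <|
        (hda i i).isUnit_of_dvd' hpd (hcross i j hij p hp hpc i)
  refine ⟨a j * n₀ + b j, ?_, fun n ↦ ?_⟩
  · refine .mul_right (IsCoprime.mul_add_left_left_iff.mpr hbj) (.prod_right fun i hi ↦ ?_)
    exact ((hdcross i (Finset.ne_of_mem_erase hi)).mul_add_of_dvd_mul_add (hn₀ i)).symm
  · rw [Int.modEq_comm, Int.modEq_iff_dvd,
      show a j * n + b j - (a j * n₀ + b j) = a j * (n - n₀) by ring,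
      mul_dvd_mul_iff_left (hpos j).ne',
      Finset.prod_dvd_iff_of_pairwise_isCoprime fun i _ l _ hil ↦ hdcop i l hil]
    simp only [Finset.mem_erase, Finset.mem_univ, and_true]
    exact forall₂_congr fun i _ ↦ (hda i i).dvd_mul_add_iff (hn₀ i) n

/-- Under the normalization hypothesis, for pairwise coprime `dᵢ` with
`gcd(∏ᵢ dᵢ, A) = 1` (`A = ∏ᵢ aᵢ`) and fixed `j`, the simultaneous conditions
`dᵢ ∣ Lᵢ(n)` for `i ≠ j` are equivalent to a single congruence
`aⱼ n + bⱼ ≡ m₀ (mod aⱼ ∏_{i ≠ j} dᵢ)` with `m₀` coprime to the modulus. -/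
theorem stmt14 (k : ℕ) (a b : Fin k → ℤ) (hpos : ∀ i, 0 < a i)
    (hsupp : ∀ p : ℕ, p.Prime → ∀ i j, (p : ℤ) ∣ a i → (p : ℤ) ∣ a j)
    (hb : ∀ p : ℕ, p.Prime → ∀ i j, (p : ℤ) ∣ a i → ¬ (p : ℤ) ∣ b j)
    (hcross : ∀ i j, i ≠ j → ∀ p : ℕ, p.Prime →
      (p : ℤ) ∣ (a i * b j - a j * b i) → ∀ l, (p : ℤ) ∣ a l)
    (d : Fin k → ℤ)
    (hdcop : ∀ i j, i ≠ j → IsCoprime (d i) (d j))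
    (hdA : IsCoprime (∏ i, d i) (∏ i, a i))
    (j : Fin k) :
    ∃ m₀ : ℤ, IsCoprime m₀ (a j * ∏ i ∈ Finset.univ.erase j, d i) ∧
      ∀ n : ℤ, (∀ i, i ≠ j → d i ∣ a i * n + b i) ↔
        a j * n + b j ≡ m₀ [ZMOD a j * ∏ i ∈ Finset.univ.erase j, d i] :=
  stmt14_general k a b hpos hb hcross d hdcop hdA j
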